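/- arXiv:2308.11379 — 4 statements merged into one kernel-verified Lean document; each statement's English description precedes it below -/
import Mathlib

section
/- Suppose a strategy profile σ is an ε-sure Nash equilibrium and every player's utility is bounded in the interval [m, M]. Then σ is an (M−m)ε-Nash equilibrium: for every player i and every deviation σ'_i, the gain u_i(σ'_i, σ_{−i}) − u_i(σ) is at most (M−m)ε. -/
/-!
Split each expected utility over the sure event `H` and its complement. On `H` the
deviation gains nothing; on `Hᶜ`, an event of probability at most `ε`, it gains at most
`M - m` pointwise, hence at most `(M - m) * ε` in expectation.
-/

open MeasureTheory

section

variable {Ω : Type*} [MeasurableSpace Ω] {μ : Measure Ω} {f g : Ω → ℝ} {s : Set Ω}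

lemma setIntegral_sub_setIntegral_le [IsFiniteMeasure μ] {m M : ℝ}
    (hf : Integrable f μ) (hg : Integrable g μ) (hfM : ∀ ω, f ω ≤ M) (hmg : ∀ ω, m ≤ g ω) :
    ∫ ω in s, f ω ∂μ - ∫ ω in s, g ω ∂μ ≤ (M - m) * μ.real s := by
  have hconst : ∀ c : ℝ, IntegrableOn (fun _ ↦ c) s μ := fun c ↦ integrableOn_const
  have hf_le : ∫ ω in s, f ω ∂μ ≤ ∫ _ in s, M ∂μ :=
    setIntegral_mono hf.integrableOn (hconst M) hfM
  have hg_ge : ∫ _ in s, m ∂μ ≤ ∫ ω in s, g ω ∂μ :=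
    setIntegral_mono (hconst m) hg.integrableOn hmg
  simp only [setIntegral_const, smul_eq_mul] at hf_le hg_ge
  linarith

lemma integral_le_add_of_setIntegral_le [IsFiniteMeasure μ] {m M : ℝ}
    (hs : MeasurableSet s) (hf : Integrable f μ) (hg : Integrable g μ)
    (hfg : ∫ ω in s, f ω ∂μ ≤ ∫ ω in s, g ω ∂μ) (hfM : ∀ ω, f ω ≤ M) (hmg : ∀ ω, m ≤ g ω) :
    ∫ ω, f ω ∂μ ≤ ∫ ω, g ω ∂μ + (M - m) * μ.real sᶜ := by
  rw [← integral_add_compl hs hf, ← integral_add_compl hs hg]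
  linarith [setIntegral_sub_setIntegral_le (s := sᶜ) hf hg hfM hmg]

lemma probReal_compl_le_of_one_sub_le [IsProbabilityMeasure μ] {ε : ℝ}
    (hs : MeasurableSet s) (h : 1 - ε ≤ μ.real s) : μ.real sᶜ ≤ ε := by
  rw [probReal_compl_eq_one_sub hs]
  linarith

end

theorem epsSureNE_is_epsNE_general
    {Ω : Type*} [MeasurableSpace Ω] (μ : Measure Ω) [IsProbabilityMeasure μ]
    {ι : Type*} [DecidableEq ι] (S : ι → Type*)
    (u : ι → (∀ i, S i) → Ω → ℝ) (σ : ∀ i, S i) (m M ε : ℝ)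
    (hmM : m ≤ M)
    (hbound : ∀ i τ ω, m ≤ u i τ ω ∧ u i τ ω ≤ M)
    (hint : ∀ i τ, Integrable (u i τ) μ)
    (hsure : ∀ i, ∃ H : Set Ω, MeasurableSet H ∧ 1 - ε ≤ (μ H).toReal ∧
      ∀ σ'i : S i,
        ∫ ω in H, u i (Function.update σ i σ'i) ω ∂μ ≤ ∫ ω in H, u i σ ω ∂μ) :
    ∀ i, ∀ σ'i : S i,
      ∫ ω, u i (Function.update σ i σ'i) ω ∂μ ≤ (∫ ω, u i σ ω ∂μ) + (M - m) * ε := by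
  intro i σ'i
  obtain ⟨H, hH, hμH, hbest⟩ := hsure i
  have hHc : μ.real Hᶜ ≤ ε := probReal_compl_le_of_one_sub_le hH hμH
  calc ∫ ω, u i (Function.update σ i σ'i) ω ∂μ
      ≤ ∫ ω, u i σ ω ∂μ + (M - m) * μ.real Hᶜ :=
        integral_le_add_of_setIntegral_le hH (hint _ _) (hint _ _) (hbest σ'i)
          (fun ω ↦ (hbound _ _ ω).2) (fun ω ↦ (hbound _ _ ω).1)
    _ ≤ ∫ ω, u i σ ω ∂μ + (M - m) * ε := by gcongr

/-- If a strategy profile `σ` is an `ε`-sure Nash equilibrium and every player's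
utility takes values in `[m, M]`, then `σ` is an `(M-m)ε`-Nash equilibrium:
for every player `i` and every deviation `σ'ᵢ`, the expected gain from deviating
is at most `(M - m) * ε`. -/
theorem epsSureNE_is_epsNE
    {Ω : Type*} [MeasurableSpace Ω] (μ : Measure Ω) [IsProbabilityMeasure μ]
    {ι : Type*} [DecidableEq ι] (S : ι → Type*)
    (u : ι → (∀ i, S i) → Ω → ℝ) (σ : ∀ i, S i) (m M ε : ℝ)
    (hε : 0 ≤ ε) (hmM : m ≤ M)
    (hbound : ∀ i τ ω, m ≤ u i τ ω ∧ u i τ ω ≤ M)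
    (hint : ∀ i τ, Integrable (u i τ) μ)
    (hsure : ∀ i, ∃ H : Set Ω, MeasurableSet H ∧ 1 - ε ≤ (μ H).toReal ∧
      ∀ σ'i : S i,
        ∫ ω in H, u i (Function.update σ i σ'i) ω ∂μ ≤ ∫ ω in H, u i σ ω ∂μ) :
    ∀ i, ∀ σ'i : S i,
      ∫ ω, u i (Function.update σ i σ'i) ω ∂μ ≤ (∫ ω, u i σ ω ∂μ) + (M - m) * ε :=
  epsSureNE_is_epsNE_general μ S u σ m M ε hmM hbound hint hsure
end

section
/- Let δ > 0, α ≥ x + z, z ≤ y ≤ x, and K > 1/(4δ²). Then e^{−2(δ+α−x−z)²K} + e^{−2(δ+α−y+z)²K} ≥ e^{−2(δ+α−x)²K} + e^{−2(δ+α−y)²K}. (Shifting weight z from the smaller value y to the larger value x increases the sum of the two exponential terms.) -/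
/-!
Put `a = δ + α - x - z ≤ b = δ + α - y` and `f t = exp (-2 K t²)`; the claim is
`f (a + z) + f b ≤ f a + f (b + z)`. Since `f'' = 4K (4K t² - 1) f` and `4K δ² > 1`, `f` is convex
on `[δ, ∞)`, which contains `a` and `b + z`; for a convex function the increment over an interval of
fixed length `z` grows as the interval moves to the right.
-/

open Real Set

theorem ConvexOn.map_add_add_map_le_map_add_map_add {𝕜 : Type*} [Field 𝕜] [LinearOrder 𝕜]
    [IsStrictOrderedRing 𝕜] {s : Set 𝕜} {f : 𝕜 → 𝕜} (hf : ConvexOn 𝕜 s f) {a b z : 𝕜}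
    (ha : a ∈ s) (hb : b + z ∈ s) (hab : a ≤ b) (hz : 0 ≤ z) : f (a + z) + f b ≤ f a + f (b + z) := by
  rcases (show a ≤ b + z by linarith).eq_or_lt with h | h
  · obtain rfl : z = 0 := by linarith
    obtain rfl : b = a := by linarith
    simp
  have hL : 0 < b + z - a := sub_pos.2 h
  set w := z / (b + z - a)
  have hw₀ : 0 ≤ w := div_nonneg hz hL.le
  have hw₁ : 0 ≤ 1 - w := sub_nonneg.2 ((div_le_one hL).2 (by linarith))
  have hwL : w * (b + z - a) = z := div_mul_cancel₀ z hL.ne'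
  -- `a + z` and `b` are the combinations of `a` and `b + z` with weights `(1 - w, w)`, `(w, 1 - w)`
  have h₁ := hf.2 ha hb hw₁ hw₀ (sub_add_cancel 1 w)
  have h₂ := hf.2 ha hb hw₀ hw₁ (add_sub_cancel w 1)
  simp only [smul_eq_mul] at h₁ h₂
  rw [show (1 - w) * a + w * (b + z) = a + z by linear_combination hwL] at h₁
  rw [show w * a + (1 - w) * (b + z) = b by linear_combination -hwL] at h₂
  linarith

theorem convexOn_exp_neg_mul_sq {c δ : ℝ} (hδ : 0 ≤ δ) (hc : 1 ≤ 2 * c * δ ^ 2) :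
    ConvexOn ℝ (Ici δ) (fun t => exp (-c * t ^ 2)) := by
  have hf' (t : ℝ) :
      HasDerivAt (fun t => exp (-c * t ^ 2)) (-2 * c * t * exp (-c * t ^ 2)) t := by
    convert ((hasDerivAt_pow 2 t).const_mul (-c)).exp using 1; ring
  have hf'' (t : ℝ) : HasDerivAt (fun t => -2 * c * t * exp (-c * t ^ 2))
      (2 * c * (2 * c * t ^ 2 - 1) * exp (-c * t ^ 2)) t :=
    (((hasDerivAt_id' t).const_mul (-2 * c)).mul (hf' t)).congr_deriv (by ring)
  refine convexOn_of_hasDerivWithinAt2_nonneg (f := fun t => exp (-c * t ^ 2)) (convex_Ici δ)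
    (by fun_prop) (fun t _ => (hf' t).hasDerivWithinAt) (fun t _ => (hf'' t).hasDerivWithinAt) ?_
  intro t ht
  rw [interior_Ici] at ht
  have hc₀ : 0 < c := by nlinarith [sq_nonneg δ]
  have hδt : δ ^ 2 ≤ t ^ 2 := pow_le_pow_left₀ hδ ht.le 2
  have : 0 ≤ 2 * c * t ^ 2 - 1 := by nlinarith
  positivity

theorem exp_sum_shift_increases_general
    (δ α x y z K : ℝ) (hδ : 0 < δ) (hz : 0 ≤ z) (hyx : y ≤ x)
    (hα : x + z ≤ α) (hK : 1 / (4 * δ ^ 2) < K) :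
    Real.exp (-2 * (δ + α - x) ^ 2 * K) + Real.exp (-2 * (δ + α - y) ^ 2 * K) ≤
      Real.exp (-2 * (δ + α - x - z) ^ 2 * K) + Real.exp (-2 * (δ + α - y + z) ^ 2 * K) := by
  have hc : 1 ≤ 2 * (2 * K) * δ ^ 2 := by
    rw [div_lt_iff₀ (by positivity)] at hK; linarith
  have key := (convexOn_exp_neg_mul_sq hδ.le hc).map_add_add_map_le_map_add_map_add
    (a := δ + α - x - z) (b := δ + α - y) (z := z)
    (by rw [mem_Ici]; linarith) (by rw [mem_Ici]; linarith) (by linarith) hz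
  rw [sub_add_cancel] at key
  have e (t : ℝ) : -2 * t ^ 2 * K = -(2 * K) * t ^ 2 := by ring
  simpa only [e] using key

/-- Shifting weight `z` from the smaller value `y` to the larger value `x`
increases the sum of the two exponential terms: if `δ > 0`, `α ≥ x + z`,
`0 ≤ z ≤ y ≤ x`, and `K > 1/(4δ²)`, then
`exp(-2(δ+α-x-z)²K) + exp(-2(δ+α-y+z)²K) ≥ exp(-2(δ+α-x)²K) + exp(-2(δ+α-y)²K)`. -/
theorem exp_sum_shift_increases
    (δ α x y z K : ℝ) (hδ : 0 < δ) (hz : 0 ≤ z) (hzy : z ≤ y) (hyx : y ≤ x)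
    (hα : x + z ≤ α) (hK : 1 / (4 * δ ^ 2) < K) :
    Real.exp (-2 * (δ + α - x) ^ 2 * K) + Real.exp (-2 * (δ + α - y) ^ 2 * K) ≤
      Real.exp (-2 * (δ + α - x - z) ^ 2 * K) + Real.exp (-2 * (δ + α - y + z) ^ 2 * K) :=
  exp_sum_shift_increases_general δ α x y z K hδ hz hyx hα hK
end

section
/- Let P* be the canonical longest path in DAG G_c, and let b be a block on a path P from b⁰ to b* containing b. Let b₁ be the last node on P preceding (or equal to) b that is on P*, and b₂ the first node on P following (or equal to) b that is on P*. If the total number of internal nodes on the P-segment and the P*-segment between b₁ and b₂ is less than N_ℓ, then b lies on an N_ℓ-almost-optimal path, namely the path that follows P* to b₁, follows P from b₁ to b₂, and then follows P* again; hence b is N_ℓ-acceptable. -/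
/-!
The spliced path `A ++ b₁ :: (M ++ b₂ :: B)` agrees with `P*` outside the two segments, so it
is a `b⁰`–`b*` path through `b`, and its symmetric difference with `P*` lies in the union of
the internal nodes `M` and `Mstar` of the two segments.
-/

/-- A path in a directed graph `adj` from `s` to `t`, represented as a nonempty list of
vertices starting at `s`, ending at `t`, with consecutive vertices related by `adj`. -/
def IsPath {V : Type*} (adj : V → V → Prop) (s t : V) (l : List V) : Prop :=
  l ≠ [] ∧ l.head? = some s ∧ l.getLast? = some t ∧ l.Chain' adj

theorem symmDiff_sup_sup_le_sup {α : Type*} [GeneralizedBooleanAlgebra α] (a b c : α) :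
    symmDiff (a ⊔ b) (a ⊔ c) ≤ b ⊔ c :=
  symmDiff_le (sup_le (le_sup_left.trans le_sup_left) (le_sup_left.trans le_sup_right))
    (sup_le (le_sup_left.trans le_sup_left) (le_sup_right.trans le_sup_right))

namespace List

variable {α : Type*}

theorem isChain_splice {R : α → α → Prop} {A B L M : List α} {x y : α}
    (h : IsChain R (A ++ x :: (L ++ y :: B))) (hM : IsChain R (x :: (M ++ [y]))) :
    IsChain R (A ++ x :: (M ++ y :: B)) := by
  rw [isChain_split, isChain_cons_split] at h ⊢
  exact ⟨h.1, hM, h.2.2⟩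

theorem head?_splice (A B L M : List α) (x y : α) :
    (A ++ x :: (M ++ y :: B)).head? = (A ++ x :: (L ++ y :: B)).head? := by
  cases A <;> rfl

theorem getLast?_splice (A B L M : List α) (x y : α) :
    (A ++ x :: (M ++ y :: B)).getLast? = (A ++ x :: (L ++ y :: B)).getLast? := by
  simp only [← cons_append, ← append_assoc, getLast?_append_cons]

theorem toFinset_splice [DecidableEq α] (A B M : List α) (x y : α) :
    (A ++ x :: (M ++ y :: B)).toFinset = (A ++ x :: y :: B).toFinset ∪ M.toFinset := by
  ext
  simp only [mem_toFinset, mem_append, mem_cons, Finset.mem_union]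
  tauto

theorem card_symmDiff_toFinset_splice_le [DecidableEq α] (A B L M : List α) (x y : α) :
    (symmDiff (A ++ x :: (M ++ y :: B)).toFinset (A ++ x :: (L ++ y :: B)).toFinset).card ≤
      M.length + L.length := by
  rw [toFinset_splice, toFinset_splice A B L]
  calc _ ≤ (M.toFinset ∪ L.toFinset).card :=
        Finset.card_le_card (symmDiff_sup_sup_le_sup _ _ _)
    _ ≤ M.toFinset.card + L.toFinset.card := Finset.card_union_le _ _
    _ ≤ M.length + L.length := add_le_add (toFinset_card_le M) (toFinset_card_le L)

end List

theorem IsPath.splice {V : Type*} {adj : V → V → Prop} {s t x y : V} {A B L M : List V}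
    (h : IsPath adj s t (A ++ x :: (L ++ y :: B))) (hM : (x :: (M ++ [y])).IsChain adj) :
    IsPath adj s t (A ++ x :: (M ++ y :: B)) := by
  obtain ⟨-, hhead, hlast, hchain⟩ := h
  exact ⟨by simp, List.head?_splice A B L M x y ▸ hhead, List.getLast?_splice A B L M x y ▸ hlast,
    List.isChain_splice hchain hM⟩

theorem IsPath.isChain_infix {V : Type*} {adj : V → V → Prop} {s t : V} {l l' : List V}
    (h : IsPath adj s t l) (hl' : l' <:+: l) : l'.IsChain adj :=
  h.2.2.2.infix hl'

theorem block_on_almost_optimal_path_general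
    {V : Type*} [DecidableEq V] (adj : V → V → Prop) (b0 bstar b b₁ b₂ : V)
    (Nℓ : ℕ) (Pstar P A B A' B' Mstar M : List V)
    (hPstar : IsPath adj b0 bstar Pstar)
    (hP : IsPath adj b0 bstar P)
    (hdecPstar : Pstar = A ++ b₁ :: (Mstar ++ b₂ :: B))
    (hdecP : P = A' ++ b₁ :: (M ++ b₂ :: B'))
    (hb : b ∈ b₁ :: (M ++ [b₂]))
    (hcount : M.length + Mstar.length < Nℓ) :
    ∃ Q : List V, IsPath adj b0 bstar Q ∧
      (symmDiff Q.toFinset Pstar.toFinset).card < Nℓ ∧ b ∈ Q := by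
  subst hdecPstar hdecP
  have hsegment : (b₁ :: (M ++ [b₂])).IsChain adj :=
    hP.isChain_infix ⟨A', B', by simp⟩
  refine ⟨A ++ b₁ :: (M ++ b₂ :: B), hPstar.splice hsegment,
    (List.card_symmDiff_toFinset_splice_le A B Mstar M b₁ b₂).trans_lt hcount,
    List.IsInfix.subset ⟨A, B, by simp⟩ hb⟩

/-- Splicing lemma for acceptability: let `P*` be the canonical longest path from
`b⁰` to `b*`, and let `b` lie on the segment between `b₁` and `b₂` of another
`b⁰`–`b*` path `P`, where `b₁` and `b₂` are on `P*`. If the total number of internal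
nodes on the two segments between `b₁` and `b₂` is less than `Nℓ`, then `b` lies on an
`Nℓ`-almost-optimal path (symmetric difference with `P*` has fewer than `Nℓ` nodes),
i.e. `b` is `Nℓ`-acceptable. -/
theorem block_on_almost_optimal_path
    {V : Type*} [DecidableEq V] (adj : V → V → Prop) (b0 bstar b b₁ b₂ : V)
    (Nℓ : ℕ) (Pstar P A B A' B' Mstar M : List V)
    (hPstar : IsPath adj b0 bstar Pstar)
    (hlongest : ∀ Q, IsPath adj b0 bstar Q → Q.length ≤ Pstar.length)
    (hP : IsPath adj b0 bstar P)
    (hdecPstar : Pstar = A ++ b₁ :: (Mstar ++ b₂ :: B))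
    (hdecP : P = A' ++ b₁ :: (M ++ b₂ :: B'))
    (hb : b ∈ b₁ :: (M ++ [b₂]))
    (hnodup : Pstar.Nodup)
    (hMint : ∀ x ∈ M, x ∉ Pstar)
    (hcount : M.length + Mstar.length < Nℓ) :
    ∃ Q : List V, IsPath adj b0 bstar Q ∧
      (symmDiff Q.toFinset Pstar.toFinset).card < Nℓ ∧ b ∈ Q :=
  block_on_almost_optimal_path_general adj b0 bstar b b₁ b₂ Nℓ Pstar P A B A' B' Mstar M hPstar hP
    hdecPstar hdecP hb hcount
end

section
/- If every subinterval of length at least L of [0, T] containing at least N_ℓ color-c blocks has the property that at least a fraction (1−δ_f) of color-c blocks are honest-and-unforked, and the honest-and-unforked color-c blocks are totally ordered by the ancestor relation (form a chain), then any path Q in the color-c minor between two consecutive chain blocks b₁ (time t₁) and b₂ (time t₂) that avoids the chain has length strictly less than the number of honest-and-unforked blocks generated in (t₁, t₂); in particular a longest path cannot bypass more than a minority of honest blocks. -/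
open Finset

theorem List.Nodup.length_le_card_of_forall_mem {α : Type*} {l : List α} {s : Finset α}
    (hl : l.Nodup) (h : ∀ x ∈ l, x ∈ s) : l.length ≤ #s :=
  s.length_toList ▸ (hl.subperm fun x hx => mem_toList.2 (h x hx)).length_le

theorem Finset.card_filter_not_lt_card_filter_of_majority {α : Type*} {s : Finset α}
    {p : α → Prop} [DecidablePred p] {δ : ℝ} (hδ : δ < 1 / 2) (hs : s.Nonempty)
    (hp : (1 - δ) * #s ≤ #(s.filter p)) : #(s.filter (¬ p ·)) < #(s.filter p) := by
  have hsplit : (#(s.filter p) : ℝ) + #(s.filter (¬ p ·)) = #s := by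
    exact_mod_cast card_filter_add_card_filter_not p
  have hpos : (0 : ℝ) < #s := by exact_mod_cast hs.card_pos
  have : (#(s.filter (¬ p ·)) : ℝ) < #(s.filter p) := by nlinarith
  exact_mod_cast this

theorem bypass_path_shorter_than_honest_chain_general
    {B : Type*} [Fintype B]
    (time : B → ℕ) (good : B → Prop) [DecidablePred good]
    (t₁ t₂ Nℓ : ℕ) (δf : ℝ) (hδf : δf < 1 / 2) (hNℓ : 0 < Nℓ)
    (hwindow : Nℓ ≤ (Finset.univ.filter (fun b => t₁ < time b ∧ time b < t₂)).card)
    (hfrac : (1 - δf) *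
        ((Finset.univ.filter (fun b => t₁ < time b ∧ time b < t₂)).card : ℝ) ≤
        ((Finset.univ.filter (fun b => good b ∧ t₁ < time b ∧ time b < t₂)).card : ℝ))
    (Q : List B) (hQnodup : Q.Nodup)
    (hQmem : ∀ b ∈ Q, ¬ good b ∧ t₁ < time b ∧ time b < t₂) :
    Q.length <
      (Finset.univ.filter (fun b => good b ∧ t₁ < time b ∧ time b < t₂)).card := by
  set W := univ.filter (fun b => t₁ < time b ∧ time b < t₂)
  have hW : W.Nonempty := card_pos.1 (hNℓ.trans_le hwindow)
  have hgood : univ.filter (fun b => good b ∧ t₁ < time b ∧ time b < t₂) = W.filter good := by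
    ext b; simp [W, and_comm]
  have hQ : Q.length ≤ #(W.filter (¬ good ·)) :=
    hQnodup.length_le_card_of_forall_mem fun b hb => by
      simpa [W, and_comm] using hQmem b hb
  rw [hgood] at hfrac ⊢
  exact hQ.trans_lt (card_filter_not_lt_card_filter_of_majority hδf hW hfrac)

/-- Suppose each round generates at most one block (`time` is injective), the
honest-and-unforked blocks form a chain under the ancestor relation, and in the
window `(t₁, t₂)` (which contains at least `Nℓ > 0` color-`c` blocks) at least a
fraction `1 - δf > 1/2` of the blocks are honest-and-unforked. Then any path `Q`
between consecutive chain blocks `b₁` (time `t₁`) and `b₂` (time `t₂`) that avoids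
the chain has length strictly less than the number of honest-and-unforked blocks
generated strictly between `t₁` and `t₂`. -/
theorem bypass_path_shorter_than_honest_chain
    {B : Type*} [Fintype B] [DecidableEq B]
    (adj : B → B → Prop) (time : B → ℕ) (good : B → Prop) [DecidablePred good]
    (t₁ t₂ Nℓ : ℕ) (δf : ℝ) (hδf0 : 0 ≤ δf) (hδf : δf < 1 / 2) (hNℓ : 0 < Nℓ)
    (hinj : Function.Injective time)
    (hchain : ∀ b b', good b → good b' → b ≠ b' →
      Relation.TransGen adj b b' ∨ Relation.TransGen adj b' b)
    (hwindow : Nℓ ≤ (Finset.univ.filter (fun b => t₁ < time b ∧ time b < t₂)).card)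
    (hfrac : (1 - δf) *
        ((Finset.univ.filter (fun b => t₁ < time b ∧ time b < t₂)).card : ℝ) ≤
        ((Finset.univ.filter (fun b => good b ∧ t₁ < time b ∧ time b < t₂)).card : ℝ))
    (b₁ b₂ : B) (hb₁ : good b₁) (hb₂ : good b₂)
    (ht₁ : time b₁ = t₁) (ht₂ : time b₂ = t₂)
    (Q : List B) (hQpath : (b₁ :: (Q ++ [b₂])).Chain' adj) (hQnodup : Q.Nodup)
    (hQmem : ∀ b ∈ Q, ¬ good b ∧ t₁ < time b ∧ time b < t₂) :
    Q.length <
      (Finset.univ.filter (fun b => good b ∧ t₁ < time b ∧ time b < t₂)).card :=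
  bypass_path_shorter_than_honest_chain_general time good t₁ t₂ Nℓ δf hδf hNℓ hwindow hfrac Q
    hQnodup hQmem
end
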